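/- arXiv:1703.09012 — 3 statements merged into one kernel-verified Lean document; each statement's English description precedes it below -/
import Mathlib

section
/- If H is an n×n symmetric positive definite matrix and B is an n×m matrix of full column rank (n ≥ m ≥ 1), and C is an m×m symmetric positive semidefinite matrix, then the saddle-point matrix K = [[H, B], [Bᵀ, -C]] is nonsingular. -/
open Matrix

namespace Matrix

theorem mulVec_injective_of_rank_eq_card {K m n : Type*} [Field K] [Fintype m] [Fintype n]
    {A : Matrix m n K} (hA : A.rank = Fintype.card n) : Function.Injective A.mulVec := by
  have h := LinearMap.finrank_range_add_finrank_ker A.mulVecLin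
  rw [← rank, hA, Module.finrank_fintype_fun_eq_card, add_eq_left, Submodule.finrank_eq_zero] at h
  exact LinearMap.ker_eq_bot.mp h

section SaddlePoint

variable {m n : Type*} [Fintype m] [Fintype n]
  {H : Matrix n n ℝ} {B : Matrix n m ℝ} {C : Matrix m m ℝ} {x : n → ℝ} {y : m → ℝ}

/-- Testing the two block rows against `x` and `y` makes the coupling terms `x ⬝ᵥ B y` cancel. -/
theorem saddle_point_energy_eq_zero (h₁ : H *ᵥ x + B *ᵥ y = 0) (h₂ : Bᵀ *ᵥ x - C *ᵥ y = 0) :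
    x ⬝ᵥ H *ᵥ x + y ⬝ᵥ C *ᵥ y = 0 := by
  have e₁ : x ⬝ᵥ H *ᵥ x + x ⬝ᵥ B *ᵥ y = 0 := by
    rw [← dotProduct_add, h₁, dotProduct_zero]
  have e₂ : y ⬝ᵥ Bᵀ *ᵥ x - y ⬝ᵥ C *ᵥ y = 0 := by
    rw [← dotProduct_sub, h₂, dotProduct_zero]
  have coupling : x ⬝ᵥ B *ᵥ y = y ⬝ᵥ Bᵀ *ᵥ x := by
    rw [dotProduct_mulVec, ← mulVec_transpose, dotProduct_comm]
  linarith

theorem eq_zero_of_saddle_point_eqs (hH : H.PosDef) (hC : C.PosSemidef)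
    (hB : Function.Injective B.mulVec)
    (h₁ : H *ᵥ x + B *ᵥ y = 0) (h₂ : Bᵀ *ᵥ x - C *ᵥ y = 0) : x = 0 ∧ y = 0 := by
  have energy := saddle_point_energy_eq_zero h₁ h₂
  have hy : 0 ≤ y ⬝ᵥ C *ᵥ y := by simpa using hC.dotProduct_mulVec_nonneg y
  have hx : x = 0 := by
    by_contra hx_ne
    have := hH.dotProduct_mulVec_pos hx_ne
    simp only [star_trivial] at this
    linarith
  subst hx
  refine ⟨rfl, hB ?_⟩
  simpa using h₁

theorem isUnit_det_fromBlocks_saddle_point [DecidableEq m] [DecidableEq n]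
    (hH : H.PosDef) (hC : C.PosSemidef) (hB : Function.Injective B.mulVec) :
    IsUnit (fromBlocks H B Bᵀ (-C)).det := by
  rw [isUnit_iff_ne_zero, Ne, ← exists_mulVec_eq_zero_iff]
  rintro ⟨v, hv, hKv⟩
  obtain ⟨x, y, rfl⟩ : ∃ x y, v = Sum.elim x y := ⟨_, _, (Sum.elim_comp_inl_inr v).symm⟩
  rw [fromBlocks_mulVec, Sum.elim_comp_inl, Sum.elim_comp_inr, ← Sum.elim_zero_zero,
    Sum.elim_eq_iff, neg_mulVec, ← sub_eq_add_neg] at hKv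
  obtain ⟨rfl, rfl⟩ := eq_zero_of_saddle_point_eqs hH hC hB hKv.1 hKv.2
  exact hv Sum.elim_zero_zero

end SaddlePoint

end Matrix

theorem saddle_point_nonsingular_general {n m : ℕ}
    (H : Matrix (Fin n) (Fin n) ℝ) (B : Matrix (Fin n) (Fin m) ℝ)
    (C : Matrix (Fin m) (Fin m) ℝ)
    (hH : H.PosDef)
    (hB : B.rank = m)
    (hC : C.PosSemidef) :
    IsUnit (Matrix.fromBlocks H B Bᵀ (-C)).det :=
  isUnit_det_fromBlocks_saddle_point hH hC
    (mulVec_injective_of_rank_eq_card (by rwa [Fintype.card_fin]))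

/-- If `H` is an `n×n` symmetric positive definite matrix, `B` is an `n×m` matrix of full
column rank (`n ≥ m ≥ 1`), and `C` is an `m×m` symmetric positive semidefinite matrix, then
the saddle-point matrix `K = [[H, B], [Bᵀ, -C]]` is nonsingular. -/
theorem saddle_point_nonsingular {n m : ℕ} (hm : 1 ≤ m) (hmn : m ≤ n)
    (H : Matrix (Fin n) (Fin n) ℝ) (B : Matrix (Fin n) (Fin m) ℝ)
    (C : Matrix (Fin m) (Fin m) ℝ)
    (hH : H.PosDef) (hHsymm : Hᵀ = H)
    (hB : B.rank = m)
    (hC : C.PosSemidef) (hCsymm : Cᵀ = C) :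
    IsUnit (Matrix.fromBlocks H B Bᵀ (-C)).det :=
  saddle_point_nonsingular_general H B C hH hB hC
end

section
/- Let A be an n×n symmetric matrix (n ≥ 3) with off-diagonal entries bounded in absolute value by μ₀ and diagonal entries bounded by μ₁. Let β be the leading 2×2 principal submatrix with |det β| > ε₁ for ε₁ ∈ (0,1). Then every entry of the multiplier matrix M = A21 β^{-1} satisfies |M(i,j)| ≤ μ₀(μ₀+μ₁)/ε₁, and every entry of the reduced matrix A22 - A21 β^{-1} A21ᵀ is bounded in absolute value by (1 + 2μ₀(μ₀+μ₁)/ε₁)·μ₀. -/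
open Matrix

/-- Growth bound for a `2×2` pivot: let `A = [[β, A21ᵀ],[A21, A22]]` be symmetric with all
entries bounded by `μ₀` and diagonal entries bounded by `μ₁`, and let the leading `2×2`
pivot `β` satisfy `|det β| > ε₁` with `ε₁ ∈ (0,1)`. Then the multipliers `M = A21 β⁻¹`
satisfy `|M i j| ≤ μ₀(μ₀+μ₁)/ε₁` and the entries of the reduced matrix
`A22 - A21 β⁻¹ A21ᵀ` are bounded by `(1 + 2μ₀(μ₀+μ₁)/ε₁) μ₀`. -/
theorem two_by_two_pivot_growth {p : ℕ} (hp : 1 ≤ p)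
    (β : Matrix (Fin 2) (Fin 2) ℝ) (A21 : Matrix (Fin p) (Fin 2) ℝ)
    (A22 : Matrix (Fin p) (Fin p) ℝ) (μ₀ μ₁ ε₁ : ℝ)
    (hAsymm : (Matrix.fromBlocks β A21ᵀ A21 A22)ᵀ = Matrix.fromBlocks β A21ᵀ A21 A22)
    (hμ₀ : ∀ i j, |(Matrix.fromBlocks β A21ᵀ A21 A22) i j| ≤ μ₀)
    (hμ₁ : ∀ i, |(Matrix.fromBlocks β A21ᵀ A21 A22) i i| ≤ μ₁)
    (hε₁ : ε₁ ∈ Set.Ioo (0 : ℝ) 1)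
    (hdet : ε₁ < |β.det|) :
    (∀ i j, |(A21 * β⁻¹) i j| ≤ μ₀ * (μ₀ + μ₁) / ε₁) ∧
    (∀ i j, |(A22 - A21 * β⁻¹ * A21ᵀ) i j| ≤ (1 + 2 * μ₀ * (μ₀ + μ₁) / ε₁) * μ₀) := by
  obtain ⟨hε0, hε1'⟩ := hε₁
  have hA21 : ∀ (i : Fin p) (k : Fin 2), |A21 i k| ≤ μ₀ := fun i k => by
    simpa using hμ₀ (Sum.inr i) (Sum.inl k)
  have hA22 : ∀ (i j : Fin p), |A22 i j| ≤ μ₀ := fun i j => by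
    simpa using hμ₀ (Sum.inr i) (Sum.inr j)
  have hβ01 : |β 0 1| ≤ μ₀ := by simpa using hμ₀ (Sum.inl 0) (Sum.inl 1)
  have hβ10 : |β 1 0| ≤ μ₀ := by simpa using hμ₀ (Sum.inl 1) (Sum.inl 0)
  have hβ00 : |β 0 0| ≤ μ₁ := by simpa using hμ₁ (Sum.inl 0)
  have hβ11 : |β 1 1| ≤ μ₁ := by simpa using hμ₁ (Sum.inl 1)
  have hμ₀0 : 0 ≤ μ₀ := le_trans (abs_nonneg _) hβ01
  have hμ₁0 : 0 ≤ μ₁ := le_trans (abs_nonneg _) hβ00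
  have hdetpos : 0 < |β.det| := lt_trans hε0 hdet
  have hdetne : β.det ≠ 0 := by
    intro h; rw [h] at hdetpos; simp at hdetpos
  have hinv : β⁻¹ = (β.det)⁻¹ • !![β 1 1, -β 0 1; -β 1 0, β 0 0] := by
    rw [Matrix.inv_def, Matrix.adjugate_fin_two, Ring.inverse_eq_inv]
  have key : ∀ a b c d x y : ℝ, |a| ≤ μ₀ → |c| ≤ μ₀ → |b| ≤ x → |d| ≤ y → 0 ≤ x → 0 ≤ y →
      |(a * b + c * d) / β.det| ≤ μ₀ * (x + y) / ε₁ := by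
    intro a b c d x y ha hc hb hd hx hy
    rw [abs_div]
    have h1 : |a * b + c * d| ≤ μ₀ * x + μ₀ * y := by
      calc |a * b + c * d| ≤ |a * b| + |c * d| := abs_add_le _ _
        _ = |a| * |b| + |c| * |d| := by rw [abs_mul, abs_mul]
        _ ≤ μ₀ * x + μ₀ * y := by
            gcongr <;> first | exact abs_nonneg _ | assumption
    calc |a * b + c * d| / |β.det| ≤ (μ₀ * x + μ₀ * y) / ε₁ :=
          div_le_div₀ (by positivity) h1 hε0 (le_of_lt hdet)
      _ = μ₀ * (x + y) / ε₁ := by ring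
  have hM : ∀ i j, |(A21 * β⁻¹) i j| ≤ μ₀ * (μ₀ + μ₁) / ε₁ := by
    intro i j
    rw [Matrix.mul_apply, Fin.sum_univ_two, hinv]
    fin_cases j
    · have := key (A21 i 0) (β 1 1) (A21 i 1) (-β 1 0) μ₁ μ₀
        (hA21 i 0) (hA21 i 1) hβ11 (by rwa [abs_neg]) hμ₁0 hμ₀0
      rw [add_comm μ₁ μ₀] at this
      convert this using 2
      simp [Matrix.smul_apply]
      ring
    · have := key (A21 i 0) (-β 0 1) (A21 i 1) (β 0 0) μ₀ μ₁
        (hA21 i 0) (hA21 i 1) (by rwa [abs_neg]) hβ00 hμ₀0 hμ₁0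
      convert this using 2
      simp [Matrix.smul_apply]
      ring
  refine ⟨hM, fun i j => ?_⟩
  have hentry : (A22 - A21 * β⁻¹ * A21ᵀ) i j =
      A22 i j - ((A21 * β⁻¹) i 0 * A21 j 0 + (A21 * β⁻¹) i 1 * A21 j 1) := by
    rw [Matrix.sub_apply, Matrix.mul_apply, Fin.sum_univ_two]
    simp [Matrix.transpose_apply]
  rw [hentry]
  have hK : 0 ≤ μ₀ * (μ₀ + μ₁) / ε₁ := by positivity
  have h1 := hM i 0
  have h2 := hM i 1
  have h3 := hA21 j 0
  have h4 := hA21 j 1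
  calc |A22 i j - ((A21 * β⁻¹) i 0 * A21 j 0 + (A21 * β⁻¹) i 1 * A21 j 1)|
      ≤ |A22 i j| + (|(A21 * β⁻¹) i 0| * |A21 j 0| + |(A21 * β⁻¹) i 1| * |A21 j 1|) := by
        calc _ ≤ |A22 i j| + |(A21 * β⁻¹) i 0 * A21 j 0 + (A21 * β⁻¹) i 1 * A21 j 1| := abs_sub _ _
          _ ≤ _ := by
              gcongr
              calc _ ≤ |(A21 * β⁻¹) i 0 * A21 j 0| + |(A21 * β⁻¹) i 1 * A21 j 1| := abs_add_le _ _
                _ = _ := by rw [abs_mul, abs_mul]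
    _ ≤ μ₀ + (μ₀ * (μ₀ + μ₁) / ε₁ * μ₀ + μ₀ * (μ₀ + μ₁) / ε₁ * μ₀) := by
        gcongr <;> first | exact abs_nonneg _ | assumption | exact hA22 i j
    _ = (1 + 2 * μ₀ * (μ₀ + μ₁) / ε₁) * μ₀ := by ring
end

section
/- Let K = [[H, B],[Bᵀ, -C]] with H symmetric positive definite, B full column rank, C symmetric positive semidefinite. If K = L D Lᵀ with L unit lower triangular and D diagonal, then D has exactly n positive and m negative diagonal entries, where n is the order of H and m the order of C. -/
/-!
`K` restricts to `H` on the first coordinate block and `-K` restricts to the Schur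
complement `C + Bᵀ H⁻¹ B` on the graph `{(-H⁻¹ B y, y)}`; both are positive definite, of
orders `n` and `m`.
Through `K = L D Lᵀ` these compressions become compressions of the diagonal form `D`, and a
diagonal form can only be positive definite on a space of dimension at most its number of
positive entries. So `D` has at least `n` positive and `m` negative entries among its `n + m`,
hence exactly that many.
-/

open Matrix Finset

section Sylvester

variable {ι κ : Type*} [Fintype ι] [Fintype κ] [DecidableEq ι]

theorem Matrix.dotProduct_diagonal_mulVec_self (d x : ι → ℝ) :
    x ⬝ᵥ (diagonal d *ᵥ x) = ∑ i, d i * x i ^ 2 :=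
  Finset.sum_congr rfl fun i _ => by rw [mulVec_diagonal]; ring

theorem Matrix.card_le_card_pos_of_posDef_transpose_mul_diagonal_mul {d : ι → ℝ}
    {M : Matrix ι κ ℝ} (h : (Mᵀ * diagonal d * M).PosDef) :
    Fintype.card κ ≤ #{i | 0 < d i} := by
  -- on a vector vanishing at the positive coordinates of `d` the form is `≤ 0`
  have hinj : Function.Injective (M.submatrix ((↑) : {i // 0 < d i} → ι) id).mulVecLin := by
    rw [← LinearMap.ker_eq_bot, LinearMap.ker_eq_bot']
    intro y hy
    by_contra hy0
    have hform : y ⬝ᵥ ((Mᵀ * diagonal d * M) *ᵥ y) = ∑ i, d i * (M *ᵥ y) i ^ 2 := by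
      rw [← mulVec_mulVec, ← mulVec_mulVec, dotProduct_mulVec, vecMul_transpose,
        dotProduct_diagonal_mulVec_self]
    have hnonpos : ∑ i, d i * (M *ᵥ y) i ^ 2 ≤ 0 := sum_nonpos fun i _ => by
      by_cases hi : 0 < d i
      · have : (M *ᵥ y) i = 0 := congrFun hy ⟨i, hi⟩
        simp [this]
      · exact mul_nonpos_of_nonpos_of_nonneg (not_lt.mp hi) (sq_nonneg _)
    have hpos := h.dotProduct_mulVec_pos hy0
    rw [star_trivial, hform] at hpos
    linarith
  simpa [Fintype.card_subtype] using LinearMap.finrank_le_finrank_of_injective hinj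

theorem Matrix.card_le_card_pos_of_eq_mul_diagonal_mul_transpose {d : ι → ℝ}
    {K L : Matrix ι ι ℝ} (hK : K = L * diagonal d * Lᵀ) {E : Matrix ι κ ℝ}
    (h : (Eᵀ * K * E).PosDef) :
    Fintype.card κ ≤ #{i | 0 < d i} := by
  refine card_le_card_pos_of_posDef_transpose_mul_diagonal_mul (M := Lᵀ * E) ?_
  simpa [hK, Matrix.mul_assoc] using h

theorem Matrix.card_le_card_neg_of_eq_mul_diagonal_mul_transpose {d : ι → ℝ}
    {K L : Matrix ι ι ℝ} (hK : K = L * diagonal d * Lᵀ) {E : Matrix ι κ ℝ}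
    (h : (-(Eᵀ * K * E)).PosDef) :
    Fintype.card κ ≤ #{i | d i < 0} := by
  have hK' : -K = L * diagonal (-d) * Lᵀ := by
    rw [hK, ← Matrix.neg_mul, ← Matrix.mul_neg, diagonal_neg]
    rfl
  convert card_le_card_pos_of_eq_mul_diagonal_mul_transpose hK' (E := E) (by simpa using h)
    using 3
  simp

end Sylvester

theorem Finset.card_filter_pos_add_card_filter_neg_le {ι α : Type*} [Fintype ι] [DecidableEq ι]
    [Preorder α] [Zero α] [DecidableLT α] (d : ι → α) :
    #{i | 0 < d i} + #{i | d i < 0} ≤ Fintype.card ι := by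
  rw [← card_union_of_disjoint (disjoint_filter.mpr fun _ _ h => (lt_asymm h).imp id)]
  exact card_le_univ _

theorem Matrix.mulVec_injective_of_rank_eq_card_s13 {K m n : Type*} [Field K] [Fintype m] [Fintype n]
    {B : Matrix m n K} (hB : B.rank = Fintype.card n) : Function.Injective B.mulVec := by
  have h := LinearMap.finrank_range_add_finrank_ker B.mulVecLin
  rw [← rank, hB, Module.finrank_fintype_fun_eq_card, Nat.add_eq_left,
    Submodule.finrank_eq_zero, LinearMap.ker_eq_bot] at h
  exact h

section Blocks

variable {R m n : Type*} [Fintype m] [Fintype n] [DecidableEq m]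

theorem Matrix.transpose_fromRows_one_zero_mul_fromBlocks_mul [Semiring R] (A : Matrix m m R)
    (B : Matrix m n R) (C : Matrix n m R) (D : Matrix n n R) :
    (fromRows (1 : Matrix m m R) (0 : Matrix n m R))ᵀ * fromBlocks A B C D *
      fromRows (1 : Matrix m m R) (0 : Matrix n m R) = A := by
  simp [transpose_fromRows, Matrix.mul_assoc, fromBlocks_mul_fromRows, fromCols_mul_fromRows]

theorem Matrix.transpose_fromRows_mul_fromBlocks_mul_eq_schur [CommRing R] [DecidableEq n]
    {A : Matrix m m R} (hA : IsUnit A) (B : Matrix m n R) (D : Matrix n n R) :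
    (fromRows (-(A⁻¹ * B)) (1 : Matrix n n R))ᵀ * fromBlocks A B Bᵀ D *
      fromRows (-(A⁻¹ * B)) (1 : Matrix n n R) = D - Bᵀ * A⁻¹ * B := by
  rw [Matrix.mul_assoc, fromBlocks_mul_fromRows, transpose_fromRows, fromCols_mul_fromRows]
  simp [← Matrix.mul_assoc, mul_nonsing_inv A ((isUnit_iff_isUnit_det A).mp hA), sub_eq_neg_add]

end Blocks

theorem saddle_point_inertia_general {n m : ℕ}
    (H : Matrix (Fin n) (Fin n) ℝ) (B : Matrix (Fin n) (Fin m) ℝ)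
    (C : Matrix (Fin m) (Fin m) ℝ)
    (L D : Matrix (Fin n ⊕ Fin m) (Fin n ⊕ Fin m) ℝ)
    (hH : H.PosDef)
    (hB : B.rank = m)
    (hC : C.PosSemidef)
    (hD : ∀ i j : Fin n ⊕ Fin m, i ≠ j → D i j = 0)
    (hK : Matrix.fromBlocks H B Bᵀ (-C) = L * D * Lᵀ) :
    (Finset.univ.filter fun i : Fin n ⊕ Fin m => 0 < D i i).card = n ∧
    (Finset.univ.filter fun i : Fin n ⊕ Fin m => D i i < 0).card = m := by
  have hK' : fromBlocks H B Bᵀ (-C) = L * diagonal D.diag * Lᵀ := by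
    rw [hK, IsDiag.diagonal_diag hD]
  have hpos : n ≤ #{i | 0 < D i i} := by
    have := card_le_card_pos_of_eq_mul_diagonal_mul_transpose hK'
      (E := fromRows (1 : Matrix (Fin n) (Fin n) ℝ) (0 : Matrix (Fin m) (Fin n) ℝ))
      (by rwa [transpose_fromRows_one_zero_mul_fromBlocks_mul])
    rw [Fintype.card_fin] at this
    exact this
  have hS : (Bᵀ * H⁻¹ * B + C).PosDef := by
    have := hH.inv.conjTranspose_mul_mul_same
      (mulVec_injective_of_rank_eq_card_s13 (hB.trans (Fintype.card_fin m).symm))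
    rw [conjTranspose_eq_transpose_of_trivial] at this
    exact this.add_posSemidef hC
  have hneg : m ≤ #{i | D i i < 0} := by
    have := card_le_card_neg_of_eq_mul_diagonal_mul_transpose hK'
      (E := fromRows (-(H⁻¹ * B)) (1 : Matrix (Fin m) (Fin m) ℝ))
      (by rwa [transpose_fromRows_mul_fromBlocks_mul_eq_schur hH.isUnit, neg_sub, sub_neg_eq_add])
    rw [Fintype.card_fin] at this
    exact this
  have hsum : #{i | 0 < D i i} + #{i | D i i < 0} ≤ n + m :=
    (card_filter_pos_add_card_filter_neg_le D.diag).trans_eq (by simp)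
  constructor <;> omega

/-- Inertia of the saddle-point matrix: if `K = [[H, B],[Bᵀ, -C]] = L D Lᵀ` with `L` unit
lower triangular (with respect to the standard ordering of the `n + m` indices) and `D`
diagonal, where `H` is symmetric positive definite, `B` has full column rank and `C` is
symmetric positive semidefinite, then `D` has exactly `n` positive and `m` negative
diagonal entries. -/
theorem saddle_point_inertia {n m : ℕ}
    (H : Matrix (Fin n) (Fin n) ℝ) (B : Matrix (Fin n) (Fin m) ℝ)
    (C : Matrix (Fin m) (Fin m) ℝ)
    (L D : Matrix (Fin n ⊕ Fin m) (Fin n ⊕ Fin m) ℝ)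
    (hH : H.PosDef) (hHsymm : Hᵀ = H)
    (hB : B.rank = m)
    (hC : C.PosSemidef) (hCsymm : Cᵀ = C)
    (hLlow : ∀ i j : Fin n ⊕ Fin m,
      finSumFinEquiv i < finSumFinEquiv j → L i j = 0)
    (hLdiag : ∀ i : Fin n ⊕ Fin m, L i i = 1)
    (hD : ∀ i j : Fin n ⊕ Fin m, i ≠ j → D i j = 0)
    (hK : Matrix.fromBlocks H B Bᵀ (-C) = L * D * Lᵀ) :
    (Finset.univ.filter fun i : Fin n ⊕ Fin m => 0 < D i i).card = n ∧
    (Finset.univ.filter fun i : Fin n ⊕ Fin m => D i i < 0).card = m :=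
  saddle_point_inertia_general H B C L D hH hB hC hD hK
end
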